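/- Let L₁ = ℂ(α₁,…,α_{2g+1}) be a rational function field in 2g+1 independent indeterminates over ℂ. The field extension of L₁ obtained by adjoining the square roots √(αᵢ − αⱼ) for all 1 ≤ i < j ≤ 2g+1 has degree 2^(2g²+g) over L₁, with Galois group isomorphic to (ℤ/2ℤ)^(2g²+g). -/

import Mathlib

set_option synthInstance.maxHeartbeats 400000

/-- The rational function field `ℂ(α₁, …, αₙ)`. -/
noncomputable abbrev RatFunField (n : ℕ) : Type := FractionRing (MvPolynomial (Fin n) ℂ)

/-!
Write `M = K(√dᵢ : i ∈ ι)` with `K` of characteristic zero. `M` is the splitting field of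
`∏ (X² - dᵢ)`, hence Galois over `K`, and recording which `√dᵢ` an automorphism negates embeds
`Gal(M/K)` into `(ℤ/2)^ι`. If the image were a proper subspace, some nonzero linear form
`x ↦ ∑_{i ∈ S} xᵢ` would vanish on it, so every automorphism would fix `∏_{i ∈ S} √dᵢ`; by Galois
theory this product lies in `K`, and `∏_{i ∈ S} dᵢ` is a square. So if the `dᵢ` are independent
modulo squares, `Gal(M/K) ≅ (ℤ/2)^ι` and `[M : K] = 2^|ι|`.

For the differences `αᵢ - αⱼ` this independence already holds in `ℂ[α]`, which is integrally
closed: each `αᵢ - αⱼ` is prime and divides no other difference, so it divides a product of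
distinct differences exactly once.
-/

theorem ZMod.neg_one_pow_val_add {R : Type*} [Ring R] (a b : ZMod 2) :
    (-1 : R) ^ (a + b).val = (-1) ^ a.val * (-1) ^ b.val := by
  rw [ZMod.val_add, ← neg_one_pow_eq_pow_mod_two, pow_add]

theorem Submodule.exists_sum_eq_zero_of_lt_top {ι : Type*} [Fintype ι]
    {p : Submodule (ZMod 2) (ι → ZMod 2)} (hp : p < ⊤) :
    ∃ S : Finset ι, S.Nonempty ∧ ∀ x ∈ p, ∑ i ∈ S, x i = 0 := by
  classical
  obtain ⟨f, hf, hfp⟩ := Submodule.exists_dual_map_eq_bot_of_lt_top hp inferInstance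
  set c : ι → ZMod 2 := fun i => f fun j => if i = j then 1 else 0
  set S := Finset.univ.filter (c · ≠ 0)
  have hfS : ∀ x, f x = ∑ i ∈ S, x i := by
    intro x
    rw [LinearMap.pi_apply_eq_sum_univ, Finset.sum_filter]
    refine Finset.sum_congr rfl fun i _ => ?_
    change x i * c i = _
    obtain h | h := (by decide : ∀ a : ZMod 2, a = 0 ∨ a = 1) (c i)
    all_goals simp [h]
  refine ⟨S, Finset.nonempty_iff_ne_empty.mpr fun hS => hf (LinearMap.ext fun x => ?_),
    fun x hx => ?_⟩
  · rw [hfS, hS, Finset.sum_empty, LinearMap.zero_apply]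
  · rw [← hfS]
    exact (Submodule.eq_bot_iff _).mp hfp (f x) ⟨x, hx, rfl⟩

theorem Prime.not_isSquare_mul {R : Type*} [CommMonoidWithZero R] [IsCancelMulZero R] {π y : R}
    (hπ : Prime π) (hy : ¬ π ∣ y) : ¬ IsSquare (π * y) := by
  rintro ⟨a, ha⟩
  obtain ⟨c, rfl⟩ := hπ.dvd_of_dvd_pow (n := 2) ⟨y, by rw [sq, ← ha]⟩
  exact hy ⟨c * c, mul_left_cancel₀ hπ.ne_zero (by rw [ha]; ac_rfl)⟩

theorem IsIntegrallyClosed.isSquare_of_isSquare_algebraMap {R K : Type*} [CommRing R]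
    [CommRing K] [Algebra R K] [IsFractionRing R K] [IsIntegrallyClosed R] {x : R}
    (h : IsSquare (algebraMap R K x)) : IsSquare x := by
  obtain ⟨r, hr⟩ := h
  obtain ⟨y, rfl⟩ := exists_algebraMap_eq_of_isIntegral_pow (R := R) (x := r) two_pos
    (by rw [sq, ← hr]; exact isIntegral_algebraMap)
  exact ⟨y, IsFractionRing.injective R K (by rw [map_mul, hr])⟩

theorem Fintype.card_subtype_fst_lt_snd (α : Type*) [Fintype α] [LinearOrder α] :
    Fintype.card {p : α × α // p.1 < p.2} = (Fintype.card α).choose 2 := by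
  rw [Fintype.card_subtype, Fintype.card_product_filter_lt]

section MultiQuadratic

open Polynomial

variable {K M ι : Type*} [Field K] [Field M] [Algebra K M] {d : ι → K} {s : ι → M}

theorem isSplittingField_prod_X_pow_two_sub_C [Fintype ι]
    (hs : ∀ i, s i ^ 2 = algebraMap K M (d i)) (hgen : Algebra.adjoin K (Set.range s) = ⊤) :
    IsSplittingField K M (∏ i, (X ^ 2 - C (d i))) := by
  have hmonic : (∏ i, (X ^ 2 - C (d i))).Monic :=
    monic_prod_of_monic _ _ fun i _ => monic_X_pow_sub_C (d i) two_ne_zero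
  have hfactor : ∀ i,
      (X ^ 2 - C (d i)).map (algebraMap K M) = (X - C (s i)) * (X - C (-s i)) := by
    intro i
    rw [Polynomial.map_sub, Polynomial.map_pow, map_X, map_C, ← hs i, map_neg, map_pow]
    ring
  refine ⟨?_, eq_top_iff.mpr (hgen ▸ Algebra.adjoin_mono ?_)⟩
  · rw [Polynomial.map_prod]
    exact Splits.prod fun i _ => hfactor i ▸ (Splits.X_sub_C _).mul (Splits.X_sub_C _)
  · rintro _ ⟨i, rfl⟩
    rw [mem_rootSet, map_prod]
    exact ⟨hmonic.ne_zero, Finset.prod_eq_zero (Finset.mem_univ i) (by simp [hs i])⟩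

theorem AlgEquiv.apply_eq_or_eq_neg_of_sq_eq {x : M} {a : K} (hx : x ^ 2 = algebraMap K M a)
    (σ : M ≃ₐ[K] M) : σ x = x ∨ σ x = -x :=
  sq_eq_sq_iff_eq_or_eq_neg.mp (by rw [← map_pow, hx, AlgEquiv.commutes])

open Classical in
noncomputable def rootSign (s : ι → M) (σ : M ≃ₐ[K] M) (i : ι) : ZMod 2 :=
  if σ (s i) = s i then 0 else 1

theorem apply_eq_neg_one_pow_rootSign (hs : ∀ i, s i ^ 2 = algebraMap K M (d i))
    (σ : M ≃ₐ[K] M) (i : ι) : σ (s i) = (-1) ^ (rootSign s σ i).val * s i := by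
  unfold rootSign
  split_ifs with h
  · simp [h]
  · rcases σ.apply_eq_or_eq_neg_of_sq_eq (hs i) with h' | h'
    · exact absurd h' h
    · simp [h', ZMod.val_one]

theorem rootSign_eq_of_apply_eq {σ : M ≃ₐ[K] M} {i : ι} (hs₀ : -s i ≠ s i) {c : ZMod 2}
    (h : σ (s i) = (-1) ^ c.val * s i) : rootSign s σ i = c := by
  obtain rfl | rfl := (by decide : ∀ a : ZMod 2, a = 0 ∨ a = 1) c
  · simp_all [rootSign]
  · simp_all [rootSign, ZMod.val_one]

theorem rootSign_mul (hs : ∀ i, s i ^ 2 = algebraMap K M (d i)) (hs₀ : ∀ i, -s i ≠ s i)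
    (σ τ : M ≃ₐ[K] M) : rootSign s (σ * τ) = rootSign s σ + rootSign s τ := by
  funext i
  refine rootSign_eq_of_apply_eq (hs₀ i) ?_
  rw [AlgEquiv.mul_apply, apply_eq_neg_one_pow_rootSign hs τ, map_mul,
    apply_eq_neg_one_pow_rootSign hs σ, map_pow, map_neg, map_one, Pi.add_apply,
    ZMod.neg_one_pow_val_add]
  ring

theorem apply_prod_eq_neg_one_pow_sum_rootSign (hs : ∀ i, s i ^ 2 = algebraMap K M (d i))
    (σ : M ≃ₐ[K] M) (S : Finset ι) :
    σ (∏ i ∈ S, s i) = (-1) ^ (∑ i ∈ S, rootSign s σ i).val * ∏ i ∈ S, s i := by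
  classical
  induction S using Finset.induction_on with
  | empty => simp
  | insert j S hj ih =>
    rw [Finset.prod_insert hj, Finset.sum_insert hj, map_mul, ih,
      apply_eq_neg_one_pow_rootSign hs, ZMod.neg_one_pow_val_add]
    ring

noncomputable def rootSignHom (hs : ∀ i, s i ^ 2 = algebraMap K M (d i))
    (hs₀ : ∀ i, -s i ≠ s i) : Additive (M ≃ₐ[K] M) →+ (ι → ZMod 2) :=
  AddMonoidHom.mk' (fun σ => rootSign s σ.toMul) fun σ τ => rootSign_mul hs hs₀ σ.toMul τ.toMul

theorem rootSignHom_injective (hs : ∀ i, s i ^ 2 = algebraMap K M (d i))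
    (hs₀ : ∀ i, -s i ≠ s i) (hgen : Algebra.adjoin K (Set.range s) = ⊤) :
    Function.Injective (rootSignHom hs hs₀) := by
  refine (injective_iff_map_eq_zero _).mpr fun σ hσ => ?_
  have hfix : Set.EqOn σ.toMul.toAlgHom (AlgHom.id K M) (Set.range s) := by
    rintro _ ⟨i, rfl⟩
    have h0 : rootSign s σ.toMul i = 0 := congrFun hσ i
    simp [apply_eq_neg_one_pow_rootSign hs, h0]
  have : σ.toMul = 1 := AlgEquiv.coe_toAlgHom_injective (AlgHom.ext_of_adjoin_eq_top hgen hfix)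
  exact Additive.toMul.injective this

theorem rootSignHom_surjective [FiniteDimensional K M] [IsGalois K M] [Fintype ι]
    (hs : ∀ i, s i ^ 2 = algebraMap K M (d i)) (hs₀ : ∀ i, -s i ≠ s i)
    (hd : ∀ S : Finset ι, S.Nonempty → ¬ IsSquare (∏ i ∈ S, d i)) :
    Function.Surjective (rootSignHom hs hs₀) := by
  rw [← AddMonoidHom.range_eq_top]
  by_contra hne
  obtain ⟨S, hS, hsum⟩ := Submodule.exists_sum_eq_zero_of_lt_top
    (p := AddSubgroup.toZModSubmodule 2 (rootSignHom hs hs₀).range) (by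
      rw [lt_top_iff_ne_top, ← map_top (AddSubgroup.toZModSubmodule 2)]
      exact fun h => hne ((AddSubgroup.toZModSubmodule 2).injective h))
  have hfix : ∀ σ : M ≃ₐ[K] M, σ (∏ i ∈ S, s i) = ∏ i ∈ S, s i := fun σ => by
    have h0 : ∑ i ∈ S, rootSign s σ i = 0 := hsum _ ⟨Additive.ofMul σ, rfl⟩
    rw [apply_prod_eq_neg_one_pow_sum_rootSign hs, h0, ZMod.val_zero, pow_zero, one_mul]
  obtain ⟨a, ha⟩ := (IsGalois.mem_range_algebraMap_iff_fixed _).mpr hfix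
  refine hd S hS ⟨a, (algebraMap K M).injective ?_⟩
  rw [map_prod, map_mul, ha, ← Finset.prod_mul_distrib]
  exact Finset.prod_congr rfl fun i _ => by rw [← hs i, sq]

theorem finrank_eq_and_nonempty_mulEquiv_of_sq_eq [CharZero K] [Fintype ι]
    (hs : ∀ i, s i ^ 2 = algebraMap K M (d i)) (hgen : Algebra.adjoin K (Set.range s) = ⊤)
    (hd : ∀ S : Finset ι, S.Nonempty → ¬ IsSquare (∏ i ∈ S, d i)) :
    Module.finrank K M = 2 ^ Fintype.card ι ∧
      Nonempty ((M ≃ₐ[K] M) ≃* Multiplicative (ι → ZMod 2)) := by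
  classical
  have := isSplittingField_prod_X_pow_two_sub_C hs hgen
  have := IsSplittingField.finiteDimensional M (∏ i, (X ^ 2 - C (d i)))
  have := Normal.of_isSplittingField (F := K) (E := M) (∏ i, (X ^ 2 - C (d i)))
  have : IsGalois K M := ⟨⟩
  have : CharZero M := charZero_of_injective_algebraMap (algebraMap K M).injective
  have hd₀ : ∀ i, d i ≠ 0 := fun i h => hd {i} (Finset.singleton_nonempty i) (by simp [h])
  have hs₀ : ∀ i, -s i ≠ s i := fun i h => hd₀ i <| by
    rw [CharZero.neg_eq_self_iff] at h
    simpa [h] using (hs i).symm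
  let e := AddEquiv.ofBijective (rootSignHom hs hs₀)
    ⟨rootSignHom_injective hs hs₀ hgen, rootSignHom_surjective hs hs₀ hd⟩
  refine ⟨?_, ⟨AddEquiv.toMultiplicativeRight e⟩⟩
  rw [← IsGalois.card_aut_eq_finrank]
  exact (Nat.card_congr e.toEquiv).trans (by simp)

end MultiQuadratic

namespace MvPolynomial

variable {R σ : Type*} [CommRing R]

theorem prime_X_sub_X [IsDomain R] {i j : σ} (hij : i ≠ j) :
    Prime (X i - X j : MvPolynomial σ R) := by
  classical
  let e := (renameEquiv R (Equiv.optionSubtypeNe i).symm).trans (optionEquivLeft R _)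
  have he : e (X i - X j) = Polynomial.X - Polynomial.C (X ⟨j, hij.symm⟩) := by
    simp [e, Equiv.optionSubtypeNe_symm_of_ne hij.symm, optionEquivLeft_X_none,
      optionEquivLeft_X_some]
  rw [← MulEquiv.prime_iff e, he]
  exact Polynomial.prime_X_sub_C _

theorem X_sub_X_dvd_X_sub_X [Nontrivial R] {i j k l : σ} (hkl : k ≠ l)
    (h : (X i - X j : MvPolynomial σ R) ∣ X k - X l) : k = i ∧ l = j ∨ k = j ∧ l = i := by
  classical
  -- substituting `X j` for `X i` kills `X i - X j`, hence also `X k - X l`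
  have hsubst : aeval (Function.update (X : σ → MvPolynomial σ R) i (X j))
      (X k - X l : MvPolynomial σ R) = 0 := by
    obtain ⟨c, hc⟩ := h
    simp [hc, Function.update_apply]
  simp only [map_sub, aeval_X, sub_eq_zero, Function.update_apply] at hsubst
  split_ifs at hsubst with hk hl hl <;> simp only [X_inj] at hsubst <;> grind

theorem not_isSquare_prod_X_sub_X {k K : Type*} [Field k] [LinearOrder σ] [Field K]
    [Algebra (MvPolynomial σ k) K] [IsFractionRing (MvPolynomial σ k) K]
    {S : Finset {p : σ × σ // p.1 < p.2}} (hS : S.Nonempty) :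
    ¬ IsSquare (∏ p ∈ S, algebraMap (MvPolynomial σ k) K (X p.1.1 - X p.1.2)) := by
  obtain ⟨p, hp⟩ := hS
  have hprime := prime_X_sub_X (R := k) p.2.ne
  rw [← map_prod, ← Finset.mul_prod_erase S _ hp]
  refine fun hsq => hprime.not_isSquare_mul ?_
    (IsIntegrallyClosed.isSquare_of_isSquare_algebraMap hsq)
  rw [hprime.dvd_finsetProd_iff]
  rintro ⟨q, hq, hdvd⟩
  rcases X_sub_X_dvd_X_sub_X q.2.ne hdvd with ⟨h₁, h₂⟩ | ⟨h₁, h₂⟩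
  · exact Finset.ne_of_mem_erase hq (Subtype.ext (Prod.ext h₁ h₂))
  · exact lt_asymm p.2 (h₁ ▸ h₂ ▸ q.2)

end MvPolynomial

theorem adjoin_sqrt_differences_degree_and_galois_general (g : ℕ)
    (M : Type*) [Field M] [Algebra (RatFunField (2 * g + 1)) M]
    (s : {p : Fin (2 * g + 1) × Fin (2 * g + 1) // p.1 < p.2} → M)
    (hs : ∀ p, (s p) ^ 2 = algebraMap (RatFunField (2 * g + 1)) M
      (algebraMap (MvPolynomial (Fin (2 * g + 1)) ℂ) (RatFunField (2 * g + 1))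
        (MvPolynomial.X p.1.1 - MvPolynomial.X p.1.2)))
    (hgen : Algebra.adjoin (RatFunField (2 * g + 1)) (Set.range s) = ⊤) :
    Module.finrank (RatFunField (2 * g + 1)) M = 2 ^ (2 * g ^ 2 + g) ∧
    Nonempty ((M ≃ₐ[RatFunField (2 * g + 1)] M) ≃*
      Multiplicative (Fin (2 * g ^ 2 + g) → ZMod 2)) := by
  have hcard : Fintype.card {p : Fin (2 * g + 1) × Fin (2 * g + 1) // p.1 < p.2} =
      2 * g ^ 2 + g := by
    rw [Fintype.card_subtype_fst_lt_snd, Fintype.card_fin, Nat.choose_two_right,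
      Nat.add_sub_cancel, show (2 * g + 1) * (2 * g) = 2 * (2 * g ^ 2 + g) by ring,
      Nat.mul_div_cancel_left _ two_pos]
  obtain ⟨hrank, ⟨e⟩⟩ := finrank_eq_and_nonempty_mulEquiv_of_sq_eq hs hgen
    fun _ hS => MvPolynomial.not_isSquare_prod_X_sub_X hS
  refine ⟨hcard ▸ hrank, ⟨e.trans (AddEquiv.toMultiplicative ?_)⟩⟩
  exact AddEquiv.arrowCongr (Fintype.equivFinOfCardEq hcard) (AddEquiv.refl _)

/-- Let `L₁ = ℂ(α₁, …, α_{2g+1})` be a rational function field in `2g+1` independent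
indeterminates over `ℂ`.  Any field extension `M/L₁` generated by square roots
`√(αᵢ - αⱼ)` of all the pairwise differences (`1 ≤ i < j ≤ 2g+1`) has degree `2^(2g²+g)`
over `L₁`, and its Galois group `Gal(M/L₁)` is isomorphic to `(ℤ/2ℤ)^(2g²+g)`. -/
theorem adjoin_sqrt_differences_degree_and_galois (g : ℕ) (hg : 1 ≤ g)
    (M : Type*) [Field M] [Algebra (RatFunField (2 * g + 1)) M]
    (s : {p : Fin (2 * g + 1) × Fin (2 * g + 1) // p.1 < p.2} → M)
    (hs : ∀ p, (s p) ^ 2 = algebraMap (RatFunField (2 * g + 1)) M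
      (algebraMap (MvPolynomial (Fin (2 * g + 1)) ℂ) (RatFunField (2 * g + 1))
        (MvPolynomial.X p.1.1 - MvPolynomial.X p.1.2)))
    (hgen : Algebra.adjoin (RatFunField (2 * g + 1)) (Set.range s) = ⊤) :
    Module.finrank (RatFunField (2 * g + 1)) M = 2 ^ (2 * g ^ 2 + g) ∧
    Nonempty ((M ≃ₐ[RatFunField (2 * g + 1)] M) ≃*
      Multiplicative (Fin (2 * g ^ 2 + g) → ZMod 2)) :=
  adjoin_sqrt_differences_degree_and_galois_general g M s hs hgen
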